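/- arXiv:1307.5019 — 2 statements merged into one kernel-verified Lean document; each statement's English description precedes it below -/
import Mathlib

section
/- Let λ > 0. There exists a constant C = C(λ) > 0 such that for all x, y, t > 0 one has W_t^λ(x,y) ≤ C (4πt)^{−1/2} e^{−(x−y)²/(4t)}; that is, the Bessel heat kernel is dominated by a constant multiple of the Gauss–Weierstrass kernel on the real line. -/
open Real MeasureTheory Set Filter

noncomputable section

/-- The modified Bessel function of the first kind `I_ν(z)`. -/
def besselI (ν z : ℝ) : ℝ :=
  ∑' k : ℕ, (z / 2) ^ (2 * (k : ℝ) + ν) / ((Nat.factorial k : ℝ) * Real.Gamma ((k : ℝ) + ν + 1))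

/-- The Bessel heat kernel `W_t^λ(x,y)`. -/
def besselHeatKernel (lam t x y : ℝ) : ℝ :=
  Real.sqrt (x * y) / (2 * t) * besselI (lam - 1 / 2) (x * y / (2 * t)) *
    Real.exp (-(x ^ 2 + y ^ 2) / (4 * t))

/-- The Bessel–Poisson kernel `P_t^λ(x,y)`, obtained by subordination. -/
def besselPoissonKernel (lam t x y : ℝ) : ℝ :=
  t / (2 * Real.sqrt Real.pi) *
    ∫ s in Set.Ioi (0 : ℝ),
      s ^ (-(3 : ℝ) / 2) * Real.exp (-t ^ 2 / (4 * s)) * besselHeatKernel lam s x y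

/-- The Bessel heat semigroup `W_t^λ u (x)`. -/
def heatSemigroup (lam : ℝ) (u : ℝ → ℝ) (t x : ℝ) : ℝ :=
  ∫ y in Set.Ioi (0 : ℝ), besselHeatKernel lam t x y * u y

/-- The Bessel–Poisson semigroup `P_t^λ f (x)`. -/
def poissonSemigroup (lam : ℝ) (f : ℝ → ℝ) (t x : ℝ) : ℝ :=
  ∫ y in Set.Ioi (0 : ℝ), besselPoissonKernel lam t x y * f y

/-- The set of Hölder quotients of `f` on `(0,∞)`. -/
def holderRatioSet (α : ℝ) (f : ℝ → ℝ) : Set ℝ :=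
  {r | ∃ x y : ℝ, 0 < x ∧ 0 < y ∧ x ≠ y ∧ r = |f x - f y| / |x - y| ^ α}

/-- The set of growth quotients `|f x|/x^α` of `f` on `(0,∞)`. -/
def growthRatioSet (α : ℝ) (f : ℝ → ℝ) : Set ℝ :=
  {r | ∃ x : ℝ, 0 < x ∧ r = |f x| / x ^ α}

/-- Membership in the Hölder space `C^α_+` (equal to `Lip_+` when `α = 1`). -/
def MemHolderPlus (α : ℝ) (f : ℝ → ℝ) : Prop :=
  ContinuousOn f (Set.Ioi 0) ∧ BddAbove (holderRatioSet α f) ∧ BddAbove (growthRatioSet α f)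

/-- The `C^α_+` norm. -/
def holderPlusNorm (α : ℝ) (f : ℝ → ℝ) : ℝ :=
  sSup (holderRatioSet α f) + sSup (growthRatioSet α f)

/-- `Γ(-σ)`, written through the functional equation `Γ(-σ) = Γ(2-σ)/((-σ)(1-σ))`. -/
def gammaNeg (σ : ℝ) : ℝ := Real.Gamma (2 - σ) / (-σ * (1 - σ))

/-- The kernel `K_σ^λ(x,y)`. -/
def fracKernelK (lam σ x y : ℝ) : ℝ :=
  1 / (-gammaNeg σ) * ∫ t in Set.Ioi (0 : ℝ), besselHeatKernel lam t x y * t ^ (-1 - σ)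

/-- `W_t^λ 1 (x)`. -/
def heatOne (lam t x : ℝ) : ℝ := ∫ y in Set.Ioi (0 : ℝ), besselHeatKernel lam t x y

/-- The function `B_σ^λ(x)`. -/
def fracFunB (lam σ x : ℝ) : ℝ :=
  1 / gammaNeg σ * ∫ t in Set.Ioi (0 : ℝ), (heatOne lam t x - 1) * t ^ (-1 - σ)

/-- The integer `m` with `m - 1 ≤ β < m`. -/
def fracOrder (β : ℝ) : ℕ := Nat.floor β + 1

/-- The Segovia–Wheeden fractional derivative `∂_t^β F(t)`, a complex number. -/
def fracDeriv (β : ℝ) (F : ℝ → ℝ) (t : ℝ) : ℂ :=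
  Complex.exp (-(Real.pi * ((fracOrder β : ℝ) - β)) * Complex.I) /
      Complex.ofReal (Real.Gamma ((fracOrder β : ℝ) - β)) *
    Complex.ofReal
      (∫ s in Set.Ioi (0 : ℝ),
        iteratedDeriv (fracOrder β) F (t + s) * s ^ ((fracOrder β : ℝ) - β - 1))

/-!
With `z = xy/(2t)` the kernel factors as `√z/√(2t) · I_{λ-1/2}(z) e^{-z} · e^{-(x-y)²/(4t)}`,
so it suffices that `I_{λ-1/2}(z) ≤ C e^z/√z`. Legendre's duplication formula together with
the Gautschi-type bound `Γ(x+λ) ≥ x/(x+1) · x^λ Γ(x)` (a consequence of the log-convexity of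
`Γ`) bounds the `k`-th term of the series of `I_{λ-1/2}(z)` by a constant times
`z^{-1/2} · z^{2k}/(2k)! · (z/(2k+1))^λ`. Since `s^λ ≤ 1 + s^m` for `m = ⌈λ⌉`, and
`z^{2k}/(2k)! · (z/(2k+1))^m ≲ z^{2k+m}/(2k+m)!`, the whole series is dominated by two
subseries of the exponential series.
-/

open scoped Nat

namespace Real

/-- Wendel's inequality. -/
theorem Gamma_add_le_rpow_mul_Gamma {x s : ℝ} (hx : 0 < x) (hs₀ : 0 ≤ s) (hs₁ : s ≤ 1) :
    Gamma (x + s) ≤ x ^ s * Gamma x := by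
  have hΓx := Gamma_pos_of_pos hx
  have hconv := convexOn_log_Gamma.2 (mem_Ioi.2 hx) (mem_Ioi.2 (by linarith : 0 < x + 1))
    (by linarith : 0 ≤ 1 - s) hs₀ (by ring)
  simp only [smul_eq_mul, Function.comp_apply, Gamma_add_one hx.ne',
    log_mul hx.ne' hΓx.ne', show (1 - s) * x + s * (x + 1) = x + s by ring] at hconv
  calc Gamma (x + s) = exp (log (Gamma (x + s))) :=
        (exp_log (Gamma_pos_of_pos (by linarith))).symm
    _ ≤ exp (s * log x + log (Gamma x)) := exp_le_exp.2 (by linarith)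
    _ = x ^ s * Gamma x := by rw [exp_add, exp_log hΓx, rpow_def_of_pos hx, mul_comm s]

theorem div_add_one_mul_rpow_mul_Gamma_le_Gamma_add_of_le_one {x s : ℝ} (hx : 0 < x)
    (hs₀ : 0 ≤ s) (hs₁ : s ≤ 1) : x / (x + 1) * (x ^ s * Gamma x) ≤ Gamma (x + s) := by
  have hxs : 0 < x + s := by linarith
  have hwendel := Gamma_add_le_rpow_mul_Gamma hxs (by linarith : 0 ≤ 1 - s) (by linarith)
  rw [show x + s + (1 - s) = x + 1 by ring, Gamma_add_one hx.ne'] at hwendel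
  have hpow : (x + s) ^ (1 - s) ≤ (x + 1) ^ (1 - s) := by gcongr
  have hsplit : x + 1 = (x + 1) ^ s * (x + 1) ^ (1 - s) := by
    rw [← rpow_add (by linarith), add_sub_cancel, rpow_one]
  have hxs_le : x ^ s ≤ (x + 1) ^ s := by gcongr; linarith
  rw [div_mul_eq_mul_div, div_le_iff₀ (by linarith), hsplit]
  calc x * (x ^ s * Gamma x) = x ^ s * (x * Gamma x) := by ring
    _ ≤ (x + 1) ^ s * ((x + 1) ^ (1 - s) * Gamma (x + s)) := by
        refine mul_le_mul hxs_le (hwendel.trans ?_) (by positivity) (by positivity)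
        exact mul_le_mul_of_nonneg_right hpow (Gamma_pos_of_pos hxs).le
    _ = Gamma (x + s) * ((x + 1) ^ s * (x + 1) ^ (1 - s)) := by ring

theorem div_add_one_mul_rpow_mul_Gamma_le_Gamma_add {x μ : ℝ} (hx : 0 < x) (hμ : 0 ≤ μ) :
    x / (x + 1) * (x ^ μ * Gamma x) ≤ Gamma (x + μ) := by
  obtain ⟨n, hn⟩ : ∃ n : ℕ, μ ≤ n + 1 := ⟨⌈μ⌉₊, (Nat.le_ceil μ).trans (by linarith)⟩
  induction n generalizing μ with
  | zero =>
    exact div_add_one_mul_rpow_mul_Gamma_le_Gamma_add_of_le_one hx hμ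
      (by simpa using hn)
  | succ n ih =>
    rcases le_or_gt μ 1 with hμ₁ | hμ₁
    · exact div_add_one_mul_rpow_mul_Gamma_le_Gamma_add_of_le_one hx hμ hμ₁
    have hprev := ih (μ := μ - 1) (by linarith) (by push_cast at hn; linarith)
    have hrec : Gamma (x + μ) = (x + (μ - 1)) * Gamma (x + (μ - 1)) := by
      rw [← Gamma_add_one (by linarith)]; ring_nf
    have hpow : x ^ μ = x * x ^ (μ - 1) := by
      rw [← rpow_one_add' hx.le (by linarith)]; ring_nf
    rw [hrec, hpow]
    calc x / (x + 1) * (x * x ^ (μ - 1) * Gamma x)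
        = x * (x / (x + 1) * (x ^ (μ - 1) * Gamma x)) := by ring
      _ ≤ (x + (μ - 1)) * Gamma (x + (μ - 1)) := by gcongr; linarith

theorem factorial_mul_Gamma_nat_add_half (k : ℕ) :
    (k ! : ℝ) * Gamma (k + 1 / 2) = (2 * k)! * √π / 4 ^ k := by
  have hdup := Gamma_mul_Gamma_add_half (k + 1 / 2)
  rw [show (k : ℝ) + 1 / 2 + 1 / 2 = k + 1 by ring,
    show 2 * ((k : ℝ) + 1 / 2) = (2 * k : ℕ) + 1 by push_cast; ring,
    Gamma_nat_eq_factorial, Gamma_nat_eq_factorial,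
    show 1 - ((2 * k : ℕ) + 1 : ℝ) = -(2 * k : ℕ) by ring, rpow_neg (by norm_num),
    rpow_natCast, pow_mul] at hdup
  rw [mul_comm, hdup]
  norm_num [div_eq_mul_inv]
  ring

end Real

theorem pow_div_factorial_mul_div_pow_le {z : ℝ} (hz : 0 ≤ z) (n m : ℕ) :
    z ^ n / n ! * (z / (n + 1)) ^ m ≤ (m + 1) ^ m * (z ^ (n + m) / (n + m)!) := by
  have hfac : ((n + m)! : ℝ) ≤ n ! * ((m + 1) * (n + 1)) ^ m := by
    rw [← Nat.factorial_mul_ascFactorial]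
    push_cast
    gcongr
    exact_mod_cast (Nat.ascFactorial_le_pow_add n m).trans
      (Nat.pow_le_pow_left (by nlinarith) m)
  calc z ^ n / n ! * (z / (n + 1)) ^ m = z ^ (n + m) / (n ! * (n + 1) ^ m) := by
        rw [div_pow, pow_add]; field_simp
    _ ≤ z ^ (n + m) / ((n + m)! / (m + 1) ^ m) := by
        gcongr
        rw [div_le_iff₀ (by positivity)]
        rw [mul_pow] at hfac
        linarith
    _ = (m + 1) ^ m * (z ^ (n + m) / (n + m)!) := by field_simp

theorem summable_pow_two_mul_add_div_factorial (z : ℝ) (m : ℕ) :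
    Summable fun k : ℕ ↦ z ^ (2 * k + m) / (2 * k + m)! :=
  (Real.summable_pow_div_factorial z).comp_injective (i := fun k ↦ 2 * k + m)
    fun a b h ↦ by simp only at h; omega

theorem tsum_pow_two_mul_add_div_factorial_le_exp {z : ℝ} (hz : 0 ≤ z) (m : ℕ) :
    ∑' k : ℕ, z ^ (2 * k + m) / (2 * k + m)! ≤ exp z := by
  rw [exp_eq_exp_ℝ, NormedSpace.exp_eq_tsum_div]
  exact tsum_comp_le_tsum_of_inj (Real.summable_pow_div_factorial z) (fun n ↦ by positivity)
    (i := fun k ↦ 2 * k + m) fun a b h ↦ by simp only at h; omega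

theorem rpow_le_one_add_pow {t μ : ℝ} (ht : 0 ≤ t) (hμ : 0 ≤ μ) {m : ℕ} (hμm : μ ≤ m) :
    t ^ μ ≤ 1 + t ^ m := by
  rcases le_or_gt t 1 with ht₁ | ht₁
  · linarith [rpow_le_one ht ht₁ hμ, pow_nonneg ht m]
  · have := rpow_le_rpow_of_exponent_le ht₁.le hμm
    rw [rpow_natCast] at this
    linarith

theorem besselI_term_le {lam z : ℝ} (hlam : 0 < lam) (hz : 0 < z) (k : ℕ) :
    (z / 2) ^ (2 * (k : ℝ) + (lam - 1 / 2)) / (k ! * Gamma (k + (lam - 1 / 2) + 1)) ≤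
      3 * √2 / √π / √z * (z ^ (2 * k) / (2 * k)! * (z / (2 * k + 1)) ^ lam) := by
  set x : ℝ := k + 1 / 2
  have hx_half : 1 / 2 ≤ x := le_add_of_nonneg_left k.cast_nonneg
  have hx : 0 < x := by linarith
  have hz2 : 0 < z / 2 := by positivity
  have hdenom :
      x ^ lam * ((2 * k)! * √π / 4 ^ k) / 3 ≤ k ! * Gamma (k + (lam - 1 / 2) + 1) := by
    have hthird : 1 / 3 ≤ x / (x + 1) := by rw [le_div_iff₀ (by positivity)]; linarith
    rw [← factorial_mul_Gamma_nat_add_half,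
      show (k : ℝ) + (lam - 1 / 2) + 1 = x + lam by ring]
    calc x ^ lam * (k ! * Gamma x) / 3 = k ! * (1 / 3 * (x ^ lam * Gamma x)) := by ring
      _ ≤ k ! * (x / (x + 1) * (x ^ lam * Gamma x)) := by gcongr
      _ ≤ k ! * Gamma (x + lam) := by
          gcongr
          exact div_add_one_mul_rpow_mul_Gamma_le_Gamma_add hx hlam.le
  have hsplit : (z / 2) ^ (2 * (k : ℝ) + (lam - 1 / 2)) =
      (z / 2) ^ (2 * k) * (z / 2) ^ lam * √2 / √z := by
    rw [show 2 * (k : ℝ) + (lam - 1 / 2) = ((2 * k : ℕ) : ℝ) + lam - 1 / 2 by push_cast; ring,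
      rpow_sub hz2, rpow_add hz2, rpow_natCast, ← sqrt_eq_rpow, sqrt_div hz.le]
    field_simp
  have hpow : (z / (2 * k + 1)) ^ lam * x ^ lam = (z / 2) ^ lam := by
    rw [← mul_rpow (by positivity) hx.le]
    congr 1
    field_simp
    ring
  have hfour : (z / 2) ^ (2 * k) * 4 ^ k = z ^ (2 * k) := by
    rw [show (4 : ℝ) ^ k = 2 ^ (2 * k) by rw [pow_mul]; norm_num, ← mul_pow,
      div_mul_cancel₀ _ two_ne_zero]
  rw [div_le_iff₀ (mul_pos (by positivity) (Gamma_pos_of_pos (by linarith)))]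
  calc (z / 2) ^ (2 * (k : ℝ) + (lam - 1 / 2))
      = 3 * √2 / √π / √z * (z ^ (2 * k) / (2 * k)! * (z / (2 * k + 1)) ^ lam) *
          (x ^ lam * ((2 * k)! * √π / 4 ^ k) / 3) := by
        rw [hsplit, ← hpow, ← hfour]
        field_simp
    _ ≤ _ := by gcongr

theorem besselI_le_mul_exp_div_sqrt {lam : ℝ} (hlam : 0 < lam) :
    ∃ C > 0, ∀ z > 0, besselI (lam - 1 / 2) z ≤ C * exp z / √z := by
  set m := ⌈lam⌉₊
  set c := 3 * √2 / √π
  refine ⟨c * (1 + (m + 1) ^ m), by positivity, fun z hz ↦ ?_⟩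
  set u : ℕ → ℝ := fun k ↦ z ^ (2 * k) / (2 * k)!
  set w : ℕ → ℝ := fun k ↦ z ^ (2 * k + m) / (2 * k + m)!
  have hu : HasSum u (∑' k, u k) := by
    simpa using (summable_pow_two_mul_add_div_factorial z 0).hasSum
  have hu_le : ∑' k, u k ≤ exp z := by
    simpa using tsum_pow_two_mul_add_div_factorial_le_exp hz.le 0
  have hw := (summable_pow_two_mul_add_div_factorial z m).hasSum
  have hterm : ∀ k : ℕ, (z / 2) ^ (2 * (k : ℝ) + (lam - 1 / 2)) /
      (k ! * Gamma (k + (lam - 1 / 2) + 1)) ≤ c / √z * (u k + (m + 1) ^ m * w k) := by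
    intro k
    refine (besselI_term_le hlam hz k).trans ?_
    gcongr
    have hshift : u k * (z / (2 * k + 1)) ^ m ≤ (m + 1) ^ m * w k := by
      simpa using pow_div_factorial_mul_div_pow_le hz.le (2 * k) m
    calc u k * (z / (2 * k + 1)) ^ lam ≤ u k * (1 + (z / (2 * k + 1)) ^ m) := by
          gcongr
          exact rpow_le_one_add_pow (by positivity) hlam.le (Nat.le_ceil lam)
      _ ≤ u k + (m + 1) ^ m * w k := by linarith
  have hmaj := (hu.add (hw.mul_left ((m + 1 : ℝ) ^ m))).mul_left (c / √z)
  have hsummable : Summable fun k : ℕ ↦ (z / 2) ^ (2 * (k : ℝ) + (lam - 1 / 2)) /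
      (k ! * Gamma (k + (lam - 1 / 2) + 1)) :=
    hmaj.summable.of_nonneg_of_le (fun k ↦ div_nonneg (by positivity)
      (mul_nonneg (by positivity)
        (Gamma_pos_of_pos (by linarith [k.cast_nonneg (α := ℝ)])).le)) hterm
  calc besselI (lam - 1 / 2) z ≤ c / √z * (∑' k, u k + (m + 1) ^ m * ∑' k, w k) :=
        hasSum_le hterm hsummable.hasSum hmaj
    _ ≤ c / √z * (exp z + (m + 1) ^ m * exp z) := by
        gcongr
        exact tsum_pow_two_mul_add_div_factorial_le_exp hz.le m
    _ = c * (1 + (m + 1) ^ m) * exp z / √z := by ring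

/-- The Bessel heat kernel is dominated by the Gauss–Weierstrass kernel. -/
theorem heat_kernel_gaussian_bound (lam : ℝ) (hlam : 0 < lam) :
    ∃ C : ℝ, 0 < C ∧ ∀ x y t : ℝ, 0 < x → 0 < y → 0 < t →
      besselHeatKernel lam t x y ≤
        C * ((4 * Real.pi * t) ^ (-(1 : ℝ) / 2) * Real.exp (-(x - y) ^ 2 / (4 * t))) := by
  obtain ⟨C, hC, hI⟩ := besselI_le_mul_exp_div_sqrt hlam
  refine ⟨C * √(2 * π), by positivity, fun x y t hx hy ht ↦ ?_⟩
  set z := x * y / (2 * t) with hz_def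
  have hz : 0 < z := by positivity
  have hexp :
      exp (-(x ^ 2 + y ^ 2) / (4 * t)) = exp (-(x - y) ^ 2 / (4 * t)) * exp (-z) := by
    rw [← exp_add, hz_def]
    congr 1
    field_simp
    ring
  have hprefactor : √(x * y) / (2 * t) = √z / √(2 * t) := by
    rw [hz_def, sqrt_div (by positivity), div_div, mul_self_sqrt (by positivity)]
  have hgauss : (4 * π * t) ^ (-(1 : ℝ) / 2) = (√(2 * π) * √(2 * t))⁻¹ := by
    rw [← sqrt_mul (by positivity), sqrt_eq_rpow, ← rpow_neg_one, ← rpow_mul (by positivity)]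
    norm_num
    ring_nf
  calc besselHeatKernel lam t x y
      = √z / √(2 * t) * besselI (lam - 1 / 2) z *
          (exp (-(x - y) ^ 2 / (4 * t)) * exp (-z)) := by
        rw [besselHeatKernel, hexp, hprefactor]
    _ ≤ √z / √(2 * t) * (C * exp z / √z) * (exp (-(x - y) ^ 2 / (4 * t)) * exp (-z)) := by
        gcongr
        exact hI z hz
    _ = _ := by
        rw [hgauss, exp_neg]
        field_simp
end
end

section
/- Let 0 < α < 1 and let f : ℝ₊ → ℝ be continuous and locally integrable. Then f ∈ C^α_+ if and only if there exists a constant C > 0 such that ∫_I |f(y) − f_I| dy ≤ C |I|^{1+α} for every bounded interval I ⊂ ℝ₊ (where f_I = (1/|I|) ∫_I f(y) dy) and ∫₀^b |f(y)| dy ≤ C b^{1+α} for every b > 0. Moreover, ‖f‖_{C^α_+} is comparable (with constants depending only on α) to the least such constant C. -/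
open Real MeasureTheory Set Filter

noncomputable section

/-!
A function in `C^α_+` differs from its mean over an interval `I` by at most `‖f‖ |I|^α` at every
point of `I`, and is bounded by `‖f‖ b^α` on `(0, b)`; integrating gives both Campanato bounds.

Conversely, passing from an interval to one of its halves moves the mean by at most `2C |I|^α`.
Along nested halvings shrinking to an endpoint of `I` the means therefore converge geometrically,
and by continuity their limit is the value of `f` at that endpoint, so
`|f_I - f(x)| ≤ 2C |I|^α / (1 - 2^{-α})` at both endpoints `x` of `I`. Comparing the two endpoints
of `(x, y)` through their common mean gives the Hölder bound; comparing `f(b)` with the mean over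
`(0, b)`, which is at most `C b^α` by the second condition, gives the growth bound.
-/

open Topology
open scoped ENNReal

def avgIoo (f : ℝ → ℝ) (a b : ℝ) : ℝ := (b - a)⁻¹ * ∫ z in Ioo a b, f z

section Average

variable {f : ℝ → ℝ} {a b c ε : ℝ}

lemma abs_avgIoo_sub_le (hab : a < b) (hf : IntegrableOn f (Ioo a b)) (c : ℝ) :
    |avgIoo f a b - c| ≤ (b - a)⁻¹ * ∫ z in Ioo a b, |f z - c| := by
  have hba : 0 < b - a := sub_pos.2 hab
  have hsub : avgIoo f a b - c = (b - a)⁻¹ * ∫ z in Ioo a b, (f z - c) := by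
    rw [avgIoo, integral_sub hf (integrableOn_const measure_Ioo_lt_top.ne), setIntegral_const,
      Real.volume_real_Ioo_of_le hab.le, smul_eq_mul]
    field_simp
  rw [hsub, abs_mul, abs_inv, abs_of_pos hba]
  gcongr
  exact abs_integral_le_integral_abs

lemma abs_avgIoo_sub_le_of_forall (hab : a < b) (hf : IntegrableOn f (Ioo a b))
    (h : ∀ z ∈ Ioo a b, |f z - c| ≤ ε) : |avgIoo f a b - c| ≤ ε := by
  have hba : 0 < b - a := sub_pos.2 hab
  calc |avgIoo f a b - c| ≤ (b - a)⁻¹ * ∫ z in Ioo a b, |f z - c| := abs_avgIoo_sub_le hab hf c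
    _ ≤ (b - a)⁻¹ * ∫ _ in Ioo a b, ε := by
      refine mul_le_mul_of_nonneg_left ?_ (inv_nonneg.2 hba.le)
      exact setIntegral_mono_on (hf.sub (integrableOn_const measure_Ioo_lt_top.ne)).abs
        (integrableOn_const measure_Ioo_lt_top.ne) measurableSet_Ioo h
    _ = ε := by
      rw [setIntegral_const, Real.volume_real_Ioo_of_le hab.le, smul_eq_mul]
      field_simp

lemma tendsto_avgIoo_of_continuousWithinAt {ι : Type*} {l : Filter ι} {p q : ι → ℝ} {x : ℝ}
    (hfx : ContinuousWithinAt f (Ioi 0) x) (hp : ∀ i, 0 ≤ p i) (hpq : ∀ i, p i < q i)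
    (hx : ∀ i, x ∈ Icc (p i) (q i)) (hlen : Tendsto (fun i => q i - p i) l (𝓝 0))
    (hf : ∀ i, IntegrableOn f (Ioo (p i) (q i))) :
    Tendsto (fun i => avgIoo f (p i) (q i)) l (𝓝 (f x)) := by
  refine Metric.tendsto_nhds.2 fun ε hε => ?_
  obtain ⟨δ, hδ, hfδ⟩ := Metric.continuousWithinAt_iff.1 hfx (ε / 2) (half_pos hε)
  filter_upwards [Metric.tendsto_nhds.1 hlen δ hδ] with i hi
  rw [Real.dist_eq, sub_zero, abs_of_pos (sub_pos.2 (hpq i))] at hi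
  refine (abs_avgIoo_sub_le_of_forall (hpq i) (hf i) fun z hz => ?_).trans_lt (half_lt_self hε)
  refine (hfδ ((hp i).trans_lt hz.1) ?_).le
  rw [Real.dist_eq, abs_lt]
  constructor <;> linarith [hz.1, hz.2, (hx i).1, (hx i).2]

end Average

def CampanatoBound (α C : ℝ) (f : ℝ → ℝ) : Prop :=
  ∀ a b : ℝ, 0 ≤ a → a < b → ∫ y in Ioo a b, |f y - avgIoo f a b| ≤ C * (b - a) ^ (1 + α)

namespace CampanatoBound

variable {f : ℝ → ℝ} {α C : ℝ}

lemma abs_avgIoo_sub_avgIoo_le (hosc : CampanatoBound α C f) {a b a' b' : ℝ}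
    (hf : IntegrableOn f (Ioo a b)) (ha : 0 ≤ a) (haa' : a ≤ a') (hab' : a' < b') (hbb' : b' ≤ b)
    (hlen : b - a ≤ 2 * (b' - a')) :
    |avgIoo f a' b' - avgIoo f a b| ≤ 2 * C * (b - a) ^ α := by
  have hsub : Ioo a' b' ⊆ Ioo a b := Ioo_subset_Ioo haa' hbb'
  have hab : a < b := by linarith
  have hba : 0 < b - a := sub_pos.2 hab
  have hosc_ab := hosc a b ha hab
  have hosc_nonneg : 0 ≤ C * (b - a) ^ (1 + α) :=
    (setIntegral_nonneg measurableSet_Ioo fun _ _ => abs_nonneg _).trans hosc_ab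
  calc |avgIoo f a' b' - avgIoo f a b|
      ≤ (b' - a')⁻¹ * ∫ y in Ioo a' b', |f y - avgIoo f a b| :=
        abs_avgIoo_sub_le hab' (hf.mono_set hsub) _
    _ ≤ (b' - a')⁻¹ * ∫ y in Ioo a b, |f y - avgIoo f a b| := by
        refine mul_le_mul_of_nonneg_left ?_ (inv_nonneg.2 (sub_pos.2 hab').le)
        exact setIntegral_mono_set (hf.sub (integrableOn_const measure_Ioo_lt_top.ne)).abs
          (ae_of_all _ fun _ => abs_nonneg _) hsub.eventuallyLE
    _ ≤ (2 / (b - a)) * (C * (b - a) ^ (1 + α)) := by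
        gcongr
        rw [inv_eq_one_div, div_le_div_iff₀ (sub_pos.2 hab') hba]
        linarith
    _ = 2 * C * (b - a) ^ α := by
        rw [Real.rpow_add hba, Real.rpow_one]
        field_simp

lemma abs_avgIoo_sub_le_of_nested (hosc : CampanatoBound α C f) (hα : 0 < α)
    (hcont : ContinuousOn f (Ioi 0)) (hint : ∀ b, 0 < b → IntegrableOn f (Ioo 0 b))
    {p q : ℕ → ℝ} {x ℓ : ℝ} (hx : 0 < x) (hℓ : 0 < ℓ) (hp : ∀ n, 0 ≤ p n)
    (hpp : ∀ n, p n ≤ p (n + 1)) (hqq : ∀ n, q (n + 1) ≤ q n)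
    (hlen : ∀ n, q n - p n = ℓ * (1 / 2) ^ n) (hmem : ∀ n, x ∈ Icc (p n) (q n)) :
    |avgIoo f (p 0) (q 0) - f x| ≤ 2 * C * ℓ ^ α / (1 - (1 / 2) ^ α) := by
  have hpq : ∀ n, p n < q n := fun n => sub_pos.1 (hlen n ▸ by positivity)
  have hint' : ∀ n, IntegrableOn f (Ioo (p n) (q n)) := fun n =>
    (hint (q n) ((hp n).trans_lt (hpq n))).mono_set (Ioo_subset_Ioo_left (hp n))
  have hstep : ∀ n, dist (avgIoo f (p n) (q n)) (avgIoo f (p (n + 1)) (q (n + 1)))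
      ≤ 2 * C * ℓ ^ α * ((1 / 2) ^ α) ^ n := by
    intro n
    rw [dist_comm, Real.dist_eq]
    refine (hosc.abs_avgIoo_sub_avgIoo_le (hint' n) (hp n) (hpp n) (hpq (n + 1)) (hqq n)
      (by rw [hlen, hlen, pow_succ]; linarith)).trans_eq ?_
    rw [hlen, Real.mul_rpow hℓ.le (by positivity), ← Real.rpow_pow_comm (by norm_num)]
    ring
  have hlim : Tendsto (fun n => avgIoo f (p n) (q n)) atTop (𝓝 (f x)) := by
    refine tendsto_avgIoo_of_continuousWithinAt (hcont x hx) hp hpq hmem ?_ hint'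
    simpa only [hlen, mul_zero] using
      (tendsto_pow_atTop_nhds_zero_of_lt_one (by norm_num) (by norm_num)).const_mul ℓ
  exact dist_le_of_le_geometric_of_tendsto₀ _ _
    (Real.rpow_lt_one (by norm_num) (by norm_num) hα) hstep hlim

lemma abs_avgIoo_sub_left_le (hosc : CampanatoBound α C f) (hα : 0 < α)
    (hcont : ContinuousOn f (Ioi 0)) (hint : ∀ b, 0 < b → IntegrableOn f (Ioo 0 b))
    {x y : ℝ} (hx : 0 < x) (hxy : x < y) :
    |avgIoo f x y - f x| ≤ 2 * C * (y - x) ^ α / (1 - (1 / 2) ^ α) := by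
  have h := hosc.abs_avgIoo_sub_le_of_nested hα hcont hint (p := fun _ => x)
    (q := fun n => x + (y - x) * (1 / 2) ^ n) hx (sub_pos.2 hxy) (fun _ => hx.le)
    (fun _ => le_rfl) (fun n => by
      have := mul_le_mul_of_nonneg_left
        (pow_le_pow_of_le_one (by norm_num : (0 : ℝ) ≤ 1 / 2) (by norm_num) (n.le_add_right 1))
        (sub_pos.2 hxy).le
      linarith)
    (fun n => by ring) (fun n => ⟨le_rfl, le_add_of_nonneg_right (by positivity)⟩)
  simpa using h

lemma abs_avgIoo_sub_right_le (hosc : CampanatoBound α C f) (hα : 0 < α)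
    (hcont : ContinuousOn f (Ioi 0)) (hint : ∀ b, 0 < b → IntegrableOn f (Ioo 0 b))
    {a b : ℝ} (ha : 0 ≤ a) (hab : a < b) :
    |avgIoo f a b - f b| ≤ 2 * C * (b - a) ^ α / (1 - (1 / 2) ^ α) := by
  have h := hosc.abs_avgIoo_sub_le_of_nested hα hcont hint
    (p := fun n => b - (b - a) * (1 / 2) ^ n) (q := fun _ => b) (ha.trans_lt hab) (sub_pos.2 hab)
    (fun n => by
      have : (1 / 2 : ℝ) ^ n ≤ 1 := pow_le_one₀ (by norm_num) (by norm_num)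
      nlinarith)
    (fun n => by
      have := mul_le_mul_of_nonneg_left
        (pow_le_pow_of_le_one (by norm_num : (0 : ℝ) ≤ 1 / 2) (by norm_num) (n.le_add_right 1))
        (sub_pos.2 hab).le
      linarith)
    (fun _ => le_rfl) (fun n => by ring) (fun n => ⟨sub_le_self _ (by positivity), le_rfl⟩)
  simpa using h

lemma abs_sub_le (hosc : CampanatoBound α C f) (hα : 0 < α) (hcont : ContinuousOn f (Ioi 0))
    (hint : ∀ b, 0 < b → IntegrableOn f (Ioo 0 b)) {x y : ℝ} (hx : 0 < x) (hy : 0 < y) :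
    |f x - f y| ≤ 4 * C / (1 - (1 / 2) ^ α) * |x - y| ^ α := by
  wlog hxy : x ≤ y generalizing x y
  · rw [abs_sub_comm, abs_sub_comm x]
    exact this hy hx (le_of_not_ge hxy)
  rcases hxy.eq_or_lt with rfl | hxy
  · simp [Real.zero_rpow hα.ne']
  rw [abs_sub_comm x, abs_of_pos (sub_pos.2 hxy)]
  calc |f x - f y| ≤ |avgIoo f x y - f x| + |avgIoo f x y - f y| := by
        simpa only [abs_sub_comm (f x)] using _root_.abs_sub_le (f x) (avgIoo f x y) (f y)
    _ ≤ 2 * C * (y - x) ^ α / (1 - (1 / 2) ^ α) + 2 * C * (y - x) ^ α / (1 - (1 / 2) ^ α) :=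
      add_le_add (hosc.abs_avgIoo_sub_left_le hα hcont hint hx hxy)
        (hosc.abs_avgIoo_sub_right_le hα hcont hint hx.le hxy)
    _ = 4 * C / (1 - (1 / 2) ^ α) * (y - x) ^ α := by ring

lemma abs_le (hosc : CampanatoBound α C f) (hα : 0 < α) (hC : 0 ≤ C)
    (hcont : ContinuousOn f (Ioi 0)) (hint : ∀ b, 0 < b → IntegrableOn f (Ioo 0 b))
    (hgrow : ∀ b, 0 < b → ∫ y in Ioo 0 b, |f y| ≤ C * b ^ (1 + α)) {b : ℝ} (hb : 0 < b) :
    |f b| ≤ 3 * C / (1 - (1 / 2) ^ α) * b ^ α := by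
  have hr : 0 < 1 - (1 / 2 : ℝ) ^ α := sub_pos.2 (Real.rpow_lt_one (by norm_num) (by norm_num) hα)
  have havg : |avgIoo f 0 b| ≤ C * b ^ α :=
    calc |avgIoo f 0 b| ≤ (b - 0)⁻¹ * ∫ y in Ioo 0 b, |f y| := by
          simpa only [sub_zero] using abs_avgIoo_sub_le hb (hint b hb) 0
      _ ≤ b⁻¹ * (C * b ^ (1 + α)) := by
          rw [sub_zero]; exact mul_le_mul_of_nonneg_left (hgrow b hb) (inv_nonneg.2 hb.le)
      _ = C * b ^ α := by rw [Real.rpow_add hb, Real.rpow_one]; field_simp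
  have hCr : C * b ^ α ≤ C / (1 - (1 / 2) ^ α) * b ^ α := by
    gcongr
    exact le_div_self hC hr (by linarith [Real.rpow_pos_of_pos (by norm_num : (0 : ℝ) < 1 / 2) α])
  calc |f b| ≤ |avgIoo f 0 b - f b| + |avgIoo f 0 b| := by
        simpa only [abs_sub_comm (f b), sub_zero] using _root_.abs_sub_le (f b) (avgIoo f 0 b) 0
    _ ≤ 2 * C * (b - 0) ^ α / (1 - (1 / 2) ^ α) + C / (1 - (1 / 2) ^ α) * b ^ α :=
      add_le_add (hosc.abs_avgIoo_sub_right_le hα hcont hint le_rfl hb) (havg.trans hCr)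
    _ = 3 * C / (1 - (1 / 2) ^ α) * b ^ α := by rw [sub_zero]; ring

end CampanatoBound

section HolderRatios

variable {α K : ℝ} {f : ℝ → ℝ}

lemma mem_upperBounds_holderRatioSet
    (h : ∀ x y : ℝ, 0 < x → 0 < y → |f x - f y| ≤ K * |x - y| ^ α) :
    K ∈ upperBounds (holderRatioSet α f) := by
  rintro _ ⟨x, y, hx, hy, hxy, rfl⟩
  exact (div_le_iff₀ (Real.rpow_pos_of_pos (abs_pos.2 (sub_ne_zero.2 hxy)) α)).2 (h x y hx hy)

lemma mem_upperBounds_growthRatioSet (h : ∀ x : ℝ, 0 < x → |f x| ≤ K * x ^ α) :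
    K ∈ upperBounds (growthRatioSet α f) := by
  rintro _ ⟨x, hx, rfl⟩
  exact (div_le_iff₀ (Real.rpow_pos_of_pos hx α)).2 (h x hx)

lemma sSup_holderRatioSet_nonneg : 0 ≤ sSup (holderRatioSet α f) :=
  Real.sSup_nonneg <| by rintro _ ⟨x, y, -, -, -, rfl⟩; positivity

lemma sSup_growthRatioSet_nonneg : 0 ≤ sSup (growthRatioSet α f) :=
  Real.sSup_nonneg <| by
    rintro _ ⟨x, hx, rfl⟩
    exact div_nonneg (abs_nonneg _) (Real.rpow_nonneg hx.le α)

lemma holderPlusNorm_nonneg : 0 ≤ holderPlusNorm α f :=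
  add_nonneg sSup_holderRatioSet_nonneg sSup_growthRatioSet_nonneg

end HolderRatios

lemma lintegral_nnnorm_le_of_forall_abs_le {g : ℝ → ℝ} {a b K : ℝ} (hab : a ≤ b)
    (h : ∀ y ∈ Ioo a b, |g y| ≤ K) :
    ∫⁻ y in Ioo a b, (‖g y‖₊ : ℝ≥0∞) ≤ ENNReal.ofReal ((b - a) * K) :=
  calc ∫⁻ y in Ioo a b, (‖g y‖₊ : ℝ≥0∞) ≤ ∫⁻ _ in Ioo a b, ENNReal.ofReal K :=
        setLIntegral_mono' measurableSet_Ioo fun y hy => by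
          rw [← enorm_eq_nnnorm, Real.enorm_eq_ofReal_abs]
          exact ENNReal.ofReal_le_ofReal (h y hy)
    _ = ENNReal.ofReal ((b - a) * K) := by
        rw [setLIntegral_const, Real.volume_Ioo, mul_comm,
          ← ENNReal.ofReal_mul (sub_nonneg.2 hab)]

lemma integral_abs_le_of_lintegral_nnnorm_le {g : ℝ → ℝ} {s : Set ℝ} {K : ℝ}
    (hg : IntegrableOn g s) (hK : 0 ≤ K)
    (h : ∫⁻ y in s, (‖g y‖₊ : ℝ≥0∞) ≤ ENNReal.ofReal K) : ∫ y in s, |g y| ≤ K := by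
  have hnorm := ofReal_integral_norm_eq_lintegral_enorm hg
  simp only [Real.norm_eq_abs, enorm_eq_nnnorm] at hnorm
  rwa [← ENNReal.ofReal_le_ofReal_iff hK, hnorm]

namespace MemHolderPlus

variable {α : ℝ} {f : ℝ → ℝ}

lemma abs_sub_le (hf : MemHolderPlus α f) {x y : ℝ} (hx : 0 < x) (hy : 0 < y) :
    |f x - f y| ≤ holderPlusNorm α f * |x - y| ^ α := by
  rcases eq_or_ne x y with rfl | hxy
  · simp only [sub_self, abs_zero]
    exact mul_nonneg holderPlusNorm_nonneg (by positivity)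
  calc |f x - f y| ≤ sSup (holderRatioSet α f) * |x - y| ^ α :=
        (div_le_iff₀ (Real.rpow_pos_of_pos (abs_pos.2 (sub_ne_zero.2 hxy)) α)).1
          (le_csSup hf.2.1 ⟨x, y, hx, hy, hxy, rfl⟩)
    _ ≤ holderPlusNorm α f * |x - y| ^ α := by
        gcongr
        exact le_add_of_nonneg_right sSup_growthRatioSet_nonneg

lemma abs_le (hf : MemHolderPlus α f) {x : ℝ} (hx : 0 < x) :
    |f x| ≤ holderPlusNorm α f * x ^ α := by
  calc |f x| ≤ sSup (growthRatioSet α f) * x ^ α :=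
        (div_le_iff₀ (Real.rpow_pos_of_pos hx α)).1 (le_csSup hf.2.2 ⟨x, hx, rfl⟩)
    _ ≤ holderPlusNorm α f * x ^ α := by
        gcongr
        exact le_add_of_nonneg_left sSup_holderRatioSet_nonneg

lemma integrableOn_Ioo (hf : MemHolderPlus α f) (hα : 0 ≤ α) {a b : ℝ} (ha : 0 ≤ a) :
    IntegrableOn f (Ioo a b) := by
  have hsub : Ioo a b ⊆ Ioi 0 := fun z hz => ha.trans_lt hz.1
  refine ⟨(hf.1.mono hsub).aestronglyMeasurable measurableSet_Ioo,
    .restrict_of_bounded (C := holderPlusNorm α f * b ^ α) measure_Ioo_lt_top ?_⟩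
  refine (ae_restrict_iff' measurableSet_Ioo).2 (ae_of_all _ fun y hy => ?_)
  rw [Real.norm_eq_abs]
  refine (hf.abs_le (hsub hy)).trans ?_
  gcongr
  exacts [holderPlusNorm_nonneg, (hsub hy).le, hy.2.le]

lemma lintegral_nnnorm_sub_avgIoo_le (hf : MemHolderPlus α f) (hα : 0 ≤ α) {a b : ℝ}
    (ha : 0 ≤ a) (hab : a < b) :
    ∫⁻ y in Ioo a b, (‖f y - avgIoo f a b‖₊ : ℝ≥0∞)
      ≤ ENNReal.ofReal (holderPlusNorm α f * (b - a) ^ (1 + α)) := by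
  have hba : 0 < b - a := sub_pos.2 hab
  rw [Real.rpow_one_add' hba.le (by linarith), mul_left_comm]
  refine lintegral_nnnorm_le_of_forall_abs_le hab.le fun y hy => ?_
  rw [abs_sub_comm]
  refine abs_avgIoo_sub_le_of_forall hab (hf.integrableOn_Ioo hα ha) fun z hz => ?_
  refine (hf.abs_sub_le (ha.trans_lt hz.1) (ha.trans_lt hy.1)).trans ?_
  gcongr
  · exact holderPlusNorm_nonneg
  · rw [_root_.abs_le]; constructor <;> linarith [hz.1, hz.2, hy.1, hy.2]

lemma lintegral_nnnorm_le (hf : MemHolderPlus α f) (hα : 0 ≤ α) {b : ℝ} (hb : 0 < b) :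
    ∫⁻ y in Ioo 0 b, (‖f y‖₊ : ℝ≥0∞) ≤ ENNReal.ofReal (holderPlusNorm α f * b ^ (1 + α)) := by
  have hbound : ∀ y ∈ Ioo 0 b, |f y| ≤ holderPlusNorm α f * b ^ α := fun y hy =>
    (hf.abs_le hy.1).trans (by gcongr; exacts [holderPlusNorm_nonneg, hy.1.le, hy.2.le])
  rw [Real.rpow_one_add' hb.le (by linarith), mul_left_comm]
  simpa only [sub_zero] using lintegral_nnnorm_le_of_forall_abs_le hb.le hbound

end MemHolderPlus

theorem memHolderPlus_of_campanatoBound {f : ℝ → ℝ} {α C : ℝ} (hα : 0 < α) (hC : 0 ≤ C)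
    (hcont : ContinuousOn f (Ioi 0)) (hint : ∀ b, 0 < b → IntegrableOn f (Ioo 0 b))
    (hosc : CampanatoBound α C f)
    (hgrow : ∀ b, 0 < b → ∫ y in Ioo 0 b, |f y| ≤ C * b ^ (1 + α)) :
    MemHolderPlus α f ∧ holderPlusNorm α f ≤ 7 / (1 - (1 / 2) ^ α) * C := by
  have hr : 0 < 1 - (1 / 2 : ℝ) ^ α := sub_pos.2 (Real.rpow_lt_one (by norm_num) (by norm_num) hα)
  have hH := mem_upperBounds_holderRatioSet fun x y hx hy => hosc.abs_sub_le hα hcont hint hx hy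
  have hG := mem_upperBounds_growthRatioSet fun x hx => hosc.abs_le hα hC hcont hint hgrow hx
  refine ⟨⟨hcont, ⟨_, hH⟩, ⟨_, hG⟩⟩, ?_⟩
  calc holderPlusNorm α f ≤ 4 * C / (1 - (1 / 2) ^ α) + 3 * C / (1 - (1 / 2) ^ α) :=
        add_le_add (Real.sSup_le hH (by positivity)) (Real.sSup_le hG (by positivity))
    _ = 7 / (1 - (1 / 2) ^ α) * C := by ring

theorem campanato_characterization_general (α : ℝ) (hα0 : 0 < α) :
    ∃ c₁ c₂ : ℝ, 0 < c₁ ∧ 0 < c₂ ∧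
      ∀ f : ℝ → ℝ, ContinuousOn f (Set.Ioi 0) → LocallyIntegrableOn f (Set.Ioi 0) →
        (MemHolderPlus α f →
          (∀ a b : ℝ, 0 ≤ a → a < b →
            (∫⁻ y in Set.Ioo a b,
                (‖f y - (b - a)⁻¹ * ∫ z in Set.Ioo a b, f z‖₊ : ENNReal)) ≤
              ENNReal.ofReal (c₁ * holderPlusNorm α f * (b - a) ^ (1 + α))) ∧
          (∀ b : ℝ, 0 < b →
            (∫⁻ y in Set.Ioo (0 : ℝ) b, (‖f y‖₊ : ENNReal)) ≤
              ENNReal.ofReal (c₁ * holderPlusNorm α f * b ^ (1 + α)))) ∧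
        (∀ C : ℝ, 0 < C →
          (∀ a b : ℝ, 0 ≤ a → a < b →
            (∫⁻ y in Set.Ioo a b,
                (‖f y - (b - a)⁻¹ * ∫ z in Set.Ioo a b, f z‖₊ : ENNReal)) ≤
              ENNReal.ofReal (C * (b - a) ^ (1 + α))) →
          (∀ b : ℝ, 0 < b →
            (∫⁻ y in Set.Ioo (0 : ℝ) b, (‖f y‖₊ : ENNReal)) ≤
              ENNReal.ofReal (C * b ^ (1 + α))) →
          MemHolderPlus α f ∧ holderPlusNorm α f ≤ c₂ * C) := by
  have hr : 0 < 1 - (1 / 2 : ℝ) ^ α := sub_pos.2 (Real.rpow_lt_one (by norm_num) (by norm_num) hα0)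
  refine ⟨1, 7 / (1 - (1 / 2) ^ α), one_pos, by positivity, fun f hcont _ =>
    ⟨fun hf => ⟨fun a b ha hab => ?_, fun b hb => ?_⟩, fun C hC hosc hgrow => ?_⟩⟩
  · simpa only [one_mul, avgIoo] using hf.lintegral_nnnorm_sub_avgIoo_le hα0.le ha hab
  · simpa only [one_mul] using hf.lintegral_nnnorm_le hα0.le hb
  have hint : ∀ b, 0 < b → IntegrableOn f (Ioo 0 b) := fun b hb =>
    ⟨(hcont.mono fun _ hz => hz.1).aestronglyMeasurable measurableSet_Ioo,
      (hgrow b hb).trans_lt ENNReal.ofReal_lt_top⟩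
  refine memHolderPlus_of_campanatoBound hα0 hC.le hcont hint (fun a b ha hab => ?_)
    fun b hb => integral_abs_le_of_lintegral_nnnorm_le (hint b hb) (by positivity) (hgrow b hb)
  have hint_ab : IntegrableOn f (Ioo a b) :=
    (hint b (ha.trans_lt hab)).mono_set (Ioo_subset_Ioo_left ha)
  exact integral_abs_le_of_lintegral_nnnorm_le
    (hint_ab.sub (integrableOn_const measure_Ioo_lt_top.ne)) (by positivity) (hosc a b ha hab)

/-- Campanato-type characterization of `C^α_+`. -/
theorem campanato_characterization (α : ℝ) (hα0 : 0 < α) (hα1 : α < 1) :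
    ∃ c₁ c₂ : ℝ, 0 < c₁ ∧ 0 < c₂ ∧
      ∀ f : ℝ → ℝ, ContinuousOn f (Set.Ioi 0) → LocallyIntegrableOn f (Set.Ioi 0) →
        (MemHolderPlus α f →
          (∀ a b : ℝ, 0 ≤ a → a < b →
            (∫⁻ y in Set.Ioo a b,
                (‖f y - (b - a)⁻¹ * ∫ z in Set.Ioo a b, f z‖₊ : ENNReal)) ≤
              ENNReal.ofReal (c₁ * holderPlusNorm α f * (b - a) ^ (1 + α))) ∧
          (∀ b : ℝ, 0 < b →
            (∫⁻ y in Set.Ioo (0 : ℝ) b, (‖f y‖₊ : ENNReal)) ≤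
              ENNReal.ofReal (c₁ * holderPlusNorm α f * b ^ (1 + α)))) ∧
        (∀ C : ℝ, 0 < C →
          (∀ a b : ℝ, 0 ≤ a → a < b →
            (∫⁻ y in Set.Ioo a b,
                (‖f y - (b - a)⁻¹ * ∫ z in Set.Ioo a b, f z‖₊ : ENNReal)) ≤
              ENNReal.ofReal (C * (b - a) ^ (1 + α))) →
          (∀ b : ℝ, 0 < b →
            (∫⁻ y in Set.Ioo (0 : ℝ) b, (‖f y‖₊ : ENNReal)) ≤
              ENNReal.ofReal (C * b ^ (1 + α))) →
          MemHolderPlus α f ∧ holderPlusNorm α f ≤ c₂ * C) :=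
  campanato_characterization_general α hα0
end
end
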